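/- Suppose that for every choice of l distinct indices μ = (μ_1,…,μ_l) with 1 ≤ μ_1 < … < μ_l ≤ m, the determinant det ε_n^{(μ,-)} = det [ε_n^{(μ_i,ν)}]_{i,ν=1,…,l} tends to 0 as n → ∞. Suppose furthermore that for every integer matrix λ = [λ^{(i,j)}] with l rows and m columns of rank l, the l×l integer-entry matrix λ·ε_n (the product of λ with the m×l matrix [ε_n^{(μ,ν)}]) is non-singular for infinitely many n. Then the dimension over ℚ of the ℚ-vector space ℚ + ℚγ_1 + ⋯ + ℚγ_m is at least 2 + m − l. -/

import Mathlib

open Filter Matrix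

private lemma cauchyBinet {l m : ℕ} {R : Type*} [CommRing R]
    (A : Matrix (Fin l) (Fin m) R) (E : Matrix (Fin m) (Fin l) R) :
    (A * E).det = ∑ g ∈ Finset.univ.filter (fun g : Fin l → Fin m => StrictMono g),
      (Matrix.of fun i ν => E (g i) ν).det * (A.submatrix id g).det := by
  classical
  have step1 : (A * E).det
      = ∑ r : Fin l → Fin m, (∏ i, E (r i) i) * (A.submatrix id r).det := by
    calc (A * E).det
        = ∑ r : Fin l → Fin m, ∑ σ : Equiv.Perm (Fin l),
            ((Equiv.Perm.sign σ : ℤ) : R) * ∏ i, A (σ i) (r i) * E (r i) i := by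
          simp only [Matrix.det_apply', Matrix.mul_apply, Finset.prod_univ_sum, Finset.mul_sum,
            Fintype.piFinset_univ]
          rw [Finset.sum_comm]
      _ = _ := by
          refine Finset.sum_congr rfl fun r _ => ?_
          rw [Matrix.det_apply', Finset.mul_sum]
          refine Finset.sum_congr rfl fun σ _ => ?_
          simp only [Matrix.submatrix_apply, id_eq, Finset.prod_mul_distrib]
          ring
  have step2 : (∑ r : Fin l → Fin m, (∏ i, E (r i) i) * (A.submatrix id r).det)
      = ∑ r ∈ Finset.univ.filter (fun r : Fin l → Fin m => Function.Injective r),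
          (∏ i, E (r i) i) * (A.submatrix id r).det := by
    refine (Finset.sum_subset (Finset.filter_subset _ _) fun r _ hr => ?_).symm
    have hinj : ¬ Function.Injective r := by simpa using hr
    rw [Function.Injective] at hinj
    push_neg at hinj
    obtain ⟨a, b, hab, hne⟩ := hinj
    have : (A.submatrix id r).det = 0 := by
      refine Matrix.det_zero_of_column_eq hne fun k => ?_
      simp [Matrix.submatrix_apply, hab]
    rw [this, mul_zero]
  have step3 : (∑ r ∈ Finset.univ.filter (fun r : Fin l → Fin m => Function.Injective r),
          (∏ i, E (r i) i) * (A.submatrix id r).det)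
      = ∑ p ∈ (Finset.univ : Finset (Equiv.Perm (Fin l))) ×ˢ
            (Finset.univ.filter (fun g : Fin l → Fin m => StrictMono g)),
          (∏ i, E ((p.2 ∘ p.1) i) i) * (A.submatrix id (p.2 ∘ p.1)).det := by
    refine (Finset.sum_nbij'
      (i := fun p : Equiv.Perm (Fin l) × (Fin l → Fin m) => p.2 ∘ p.1)
      (j := fun r : Fin l → Fin m => ((Tuple.sort r)⁻¹, r ∘ Tuple.sort r))
      ?_ ?_ ?_ ?_ ?_).symm
    · intro p hp
      have hsm : StrictMono p.2 := by
        simpa using (Finset.mem_product.mp hp).2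
      simp only [Finset.mem_filter, Finset.mem_univ, true_and]
      exact hsm.injective.comp p.1.injective
    · intro r hr
      have hrinj : Function.Injective r := by simpa using hr
      refine Finset.mem_product.mpr ⟨Finset.mem_univ _, ?_⟩
      simp only [Finset.mem_filter, Finset.mem_univ, true_and]
      exact (Tuple.monotone_sort r).strictMono_of_injective
        (hrinj.comp (Tuple.sort r).injective)
    · intro p hp
      have hsm : StrictMono p.2 := by
        simpa using (Finset.mem_product.mp hp).2
      set r : Fin l → Fin m := p.2 ∘ p.1 with hrdef
      have hrinj : Function.Injective r := hsm.injective.comp p.1.injective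
      have hmono1 : Monotone (r ∘ (Tuple.sort r)) := Tuple.monotone_sort r
      have hmono2 : Monotone (r ∘ ⇑(p.1⁻¹)) := by
        have heq : r ∘ ⇑(p.1⁻¹) = p.2 := by
          funext x
          simp [hrdef, Function.comp]
        rw [heq]
        exact hsm.monotone
      have hfun : r ∘ (Tuple.sort r) = r ∘ ⇑(p.1⁻¹) :=
        Tuple.unique_monotone hmono1 hmono2
      have hsort : Tuple.sort r = p.1⁻¹ :=
        Equiv.ext fun x => hrinj (congrFun hfun x)
      ext x
      · simp [hsort]
      · simp only [hsort]
        simp [hrdef, Function.comp]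
    · intro r hr
      funext x
      simp [Function.comp]
    · intro p hp
      rfl
  rw [step1, step2, step3, Finset.sum_product]
  rw [Finset.sum_comm]
  refine Finset.sum_congr rfl fun g hg => ?_
  have hgm : StrictMono g := by simpa using hg
  have hsub : ∀ σ : Equiv.Perm (Fin l),
      A.submatrix id (g ∘ σ) = (A.submatrix id g).submatrix id σ := by
    intro σ; rfl
  calc (∑ σ : Equiv.Perm (Fin l),
          (∏ i, E ((g ∘ σ) i) i) * (A.submatrix id (g ∘ σ)).det)
      = ∑ σ : Equiv.Perm (Fin l),
          (((Equiv.Perm.sign σ : ℤ) : R) * ∏ i, E (g (σ i)) i) * (A.submatrix id g).det := by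
        refine Finset.sum_congr rfl fun σ _ => ?_
        rw [hsub σ, Matrix.det_permute']
        simp only [Function.comp_apply]
        ring
    _ = (Matrix.of fun i ν => E (g i) ν).det * (A.submatrix id g).det := by
        rw [← Finset.sum_mul]
        congr 1
        rw [Matrix.det_apply']
        rfl

/-- **Theorem 2.1** (the main criterion). Let `γ 0, …, γ (m-1)` be real numbers,
`1 ≤ l ≤ m`, and let `q n ν`, `p n μ ν` be integer sequences with
`ε n μ ν = q n ν * γ μ - p n μ ν`.  If every `l × l` minor (with rows a strictly
increasing multi-index `μs`) of the `m × l` matrix `ε n` tends to `0`, and for every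
integer `l × m` matrix `lam` of rank `l` the `l × l` matrix `lam * ε n` is
non-singular for infinitely many `n`, then
`dim_ℚ (ℚ + ℚ γ 0 + ⋯ + ℚ γ (m-1)) ≥ 2 + m - l`. -/
theorem stmt_0 (m l : ℕ) (hl : 1 ≤ l) (hlm : l ≤ m)
    (γ : Fin m → ℝ) (q : ℕ → Fin l → ℤ) (p : ℕ → Fin m → Fin l → ℤ)
    (ε : ℕ → Fin m → Fin l → ℝ)
    (hε : ∀ n μ ν, ε n μ ν = (q n ν : ℝ) * γ μ - (p n μ ν : ℝ))
    (hdet : ∀ μs : Fin l → Fin m, StrictMono μs →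
      Tendsto (fun n => (Matrix.of fun i ν => ε n (μs i) ν).det) atTop (nhds 0))
    (hnonsing : ∀ lam : Matrix (Fin l) (Fin m) ℤ,
      (lam.map (Int.cast : ℤ → ℚ)).rank = l →
      ∃ᶠ n in atTop,
        ((lam.map (Int.cast : ℤ → ℝ)) * (Matrix.of fun μ ν => ε n μ ν)).det ≠ 0) :
    ((2 + m - l : ℕ) : Cardinal) ≤
      Module.rank ℚ ↥(Submodule.span ℚ (insert (1 : ℝ) (Set.range γ))) := by
  classical
  by_contra hcon
  push_neg at hcon
  -- the vector `(1, γ 0, …, γ (m-1))` and the associated linear combination map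
  set g : Fin (m + 1) → ℝ := Fin.cons 1 γ with hgdef
  set φ : (Fin (m + 1) → ℚ) →ₗ[ℚ] ℝ := Fintype.linearCombination ℚ g with hφdef
  have hφapply : ∀ u : Fin (m + 1) → ℚ, φ u = ∑ j, u j • g j := fun u => rfl
  have hrange : LinearMap.range φ = Submodule.span ℚ (insert (1 : ℝ) (Set.range γ)) := by
    rw [hφdef, Fintype.range_linearCombination, hgdef, Fin.range_cons]
  -- dimension bookkeeping
  have hVrank : Module.rank ℚ ↥(LinearMap.range φ) < ((2 + m - l : ℕ) : Cardinal) := by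
    rw [hrange]; exact hcon
  have hfd : FiniteDimensional ℚ ↥(LinearMap.range φ) := inferInstance
  have hV : Module.finrank ℚ ↥(LinearMap.range φ) < 2 + m - l := by
    have := Module.finrank_eq_rank ℚ ↥(LinearMap.range φ)
    rw [← this] at hVrank
    exact_mod_cast hVrank
  have hrn := LinearMap.finrank_range_add_finrank_ker φ
  have hdom : Module.finrank ℚ (Fin (m + 1) → ℚ) = m + 1 := by
    simp [Module.finrank_pi]
  rw [hdom] at hrn
  have hlker : l ≤ Module.finrank ℚ ↥(LinearMap.ker φ) := by omega
  -- extract `l` linearly independent kernel vectors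
  set B := Module.finBasis ℚ ↥(LinearMap.ker φ) with hBdef
  set w : Fin l → (Fin (m + 1) → ℚ) :=
    fun i => ((B (Fin.castLE hlker i) : ↥(LinearMap.ker φ)) : Fin (m + 1) → ℚ) with hwdef
  have hwker : ∀ i, w i ∈ LinearMap.ker φ := fun i => (B (Fin.castLE hlker i)).2
  have hwind : LinearIndependent ℚ w := by
    have h1 : LinearIndependent ℚ (fun i : Fin l => B (Fin.castLE hlker i)) :=
      B.linearIndependent.comp _ (Fin.castLE_injective hlker)
    exact h1.map' (LinearMap.ker φ).subtype (Submodule.ker_subtype _)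
  -- clear denominators
  set d : Fin l → ℕ := fun i => ∏ j, (w i j).den with hddef
  have hd0 : ∀ i, (d i : ℚ) ≠ 0 := by
    intro i
    rw [hddef]
    push_cast
    exact Finset.prod_ne_zero_iff.mpr fun j _ => by
      exact_mod_cast (Nat.cast_ne_zero (R := ℚ)).mpr (w i j).den_nz
  have hz : ∀ i j, ∃ zz : ℤ, (zz : ℚ) = (d i : ℚ) * w i j := by
    intro i j
    obtain ⟨k, hk⟩ := Finset.dvd_prod_of_mem (fun j => (w i j).den) (Finset.mem_univ j)
    refine ⟨(w i j).num * ((k : ℤ)), ?_⟩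
    have hq : (w i j) * ((w i j).den : ℚ) = (w i j).num := Rat.mul_den_eq_num _
    have hdk : (d i : ℚ) = ((w i j).den : ℚ) * (k : ℚ) := by
      rw [hddef]; exact_mod_cast congrArg (Nat.cast : ℕ → ℚ) hk
    rw [hdk]
    push_cast
    linear_combination (-(k : ℚ)) * hq
  choose z hzz using hz
  set Z : Fin l → (Fin (m + 1) → ℚ) := fun i j => (z i j : ℚ) with hZdef
  have hZeq : ∀ i, Z i = (d i : ℚ) • w i := by
    intro i; funext j
    simp only [hZdef, Pi.smul_apply, smul_eq_mul]
    exact hzz i j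
  have hZker : ∀ i, Z i ∈ LinearMap.ker φ := by
    intro i; rw [hZeq]; exact Submodule.smul_mem _ _ (hwker i)
  have hZind : LinearIndependent ℚ Z := by
    rw [Fintype.linearIndependent_iff]
    intro c hc i
    have hc' : ∑ i, (c i * (d i : ℚ)) • w i = 0 := by
      rw [← hc]
      refine (Finset.sum_congr rfl fun i _ => ?_).symm
      rw [hZeq, smul_smul]
    have := Fintype.linearIndependent_iff.mp hwind _ hc' i
    exact (mul_eq_zero.mp this).resolve_right (hd0 i)
  -- the key linear relations over ℝ
  have hrel : ∀ i, (z i 0 : ℝ) + ∑ j : Fin m, (z i j.succ : ℝ) * γ j = 0 := by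
    intro i
    have h0 : ∑ j, Z i j • g j = 0 := by
      have h1 := hZker i
      rw [LinearMap.mem_ker] at h1
      rw [hφapply] at h1
      exact h1
    rw [Fin.sum_univ_succ] at h0
    simpa [hgdef, hZdef, Rat.smul_def] using h0
  -- the integer matrix of relation coefficients
  set lam : Matrix (Fin l) (Fin m) ℤ := Matrix.of fun i j => z i j.succ with hlamdef
  have hlamrank : (lam.map (Int.cast : ℤ → ℚ)).rank = l := by
    have hind : LinearIndependent ℚ (fun i => (lam.map (Int.cast : ℤ → ℚ)) i) := by
      rw [Fintype.linearIndependent_iff]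
      intro t ht i
      -- build the kernel vector u
      set u : Fin (m + 1) → ℚ := ∑ i, t i • Z i with hudef
      have hucoord : ∀ j : Fin m, u j.succ = 0 := by
        intro j
        have := congrFun ht j
        simp only [Finset.sum_apply, Pi.smul_apply, Pi.zero_apply, smul_eq_mul] at this ⊢
        rw [hudef]
        simp only [Finset.sum_apply, Pi.smul_apply, smul_eq_mul]
        simpa [hlamdef, hZdef, Matrix.map_apply] using this
      have huker : u ∈ LinearMap.ker φ := by
        rw [hudef]
        exact Submodule.sum_mem _ fun i _ => Submodule.smul_mem _ _ (hZker i)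
      have hu0 : u 0 = 0 := by
        have h1 : φ u = 0 := huker
        rw [hφapply, Fin.sum_univ_succ] at h1
        simp only [hgdef, Fin.cons_zero, Fin.cons_succ] at h1
        have h2 : ∑ j : Fin m, u j.succ • γ j = 0 := by
          refine Finset.sum_eq_zero fun j _ => ?_
          rw [hucoord j, zero_smul]
        rw [h2, add_zero, Rat.smul_def, mul_one] at h1
        exact_mod_cast h1
      have huzero : u = 0 := by
        funext j
        refine Fin.cases ?_ ?_ j
        · exact hu0
        · exact hucoord
      have := Fintype.linearIndependent_iff.mp hZind t (by rw [← hudef, huzero])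
      exact this i
    have := LinearIndependent.rank_matrix (M := lam.map (Int.cast : ℤ → ℚ)) hind
    simpa using this
  -- `lam * ε n` is an integer matrix
  set N : ℕ → Matrix (Fin l) (Fin l) ℤ :=
    fun n => Matrix.of fun i ν => -(q n ν * z i 0) - ∑ j, z i j.succ * p n j ν with hNdef
  have hNE : ∀ n, (lam.map (Int.cast : ℤ → ℝ)) * (Matrix.of fun μ ν => ε n μ ν)
      = (N n).map (Int.cast : ℤ → ℝ) := by
    intro n
    ext i ν
    simp only [Matrix.mul_apply, Matrix.map_apply, Matrix.of_apply, hlamdef, hNdef, hε]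
    have hsum : ∑ j : Fin m, (z i j.succ : ℝ) * ((q n ν : ℝ) * γ j - (p n j ν : ℝ))
        = (q n ν : ℝ) * (∑ j : Fin m, (z i j.succ : ℝ) * γ j)
          - ∑ j : Fin m, (z i j.succ : ℝ) * (p n j ν : ℝ) := by
      rw [Finset.mul_sum, ← Finset.sum_sub_distrib]
      refine Finset.sum_congr rfl fun j _ => ?_
      ring
    rw [hsum]
    have hγ : ∑ j : Fin m, (z i j.succ : ℝ) * γ j = -(z i 0 : ℝ) := by
      have := hrel i; linarith
    rw [hγ]
    push_cast
    ring
  -- determinant of `lam * ε n` tends to 0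
  have hdet0 : Tendsto (fun n => (((N n).det : ℤ) : ℝ)) atTop (nhds 0) := by
    have key : ∀ n, (((N n).det : ℤ) : ℝ)
        = ∑ gg ∈ Finset.univ.filter (fun gg : Fin l → Fin m => StrictMono gg),
            (Matrix.of fun i ν => ε n (gg i) ν).det
              * ((lam.map (Int.cast : ℤ → ℝ)).submatrix id gg).det := by
      intro n
      have h1 : (((N n).det : ℤ) : ℝ) = ((N n).map (Int.cast : ℤ → ℝ)).det := by
        simpa using RingHom.map_det (Int.castRingHom ℝ) (N n)
      rw [h1, ← hNE n, cauchyBinet]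
      rfl
    rw [tendsto_congr key]
    have : Tendsto (fun n =>
        ∑ gg ∈ Finset.univ.filter (fun gg : Fin l → Fin m => StrictMono gg),
          (Matrix.of fun i ν => ε n (gg i) ν).det
            * ((lam.map (Int.cast : ℤ → ℝ)).submatrix id gg).det) atTop
        (nhds (∑ gg ∈ Finset.univ.filter (fun gg : Fin l → Fin m => StrictMono gg), 0)) := by
      refine tendsto_finset_sum _ fun gg hgg => ?_
      have hgm : StrictMono gg := by simpa using hgg
      simpa using (hdet gg hgm).mul_const _
    simpa using this
  -- contradiction
  have hfreq := hnonsing lam hlamrank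
  have habs : Tendsto (fun n => |(((N n).det : ℤ) : ℝ)|) atTop (nhds 0) := by
    have := hdet0.abs
    simpa using this
  have hev : ∀ᶠ n in atTop, |(((N n).det : ℤ) : ℝ)| < 1 :=
    habs.eventually_lt_const one_pos
  obtain ⟨n, hne, hlt⟩ := (hfreq.and_eventually hev).exists
  have hne' : (N n).det ≠ 0 := by
    intro h0
    apply hne
    rw [hNE n]
    have h1 : (((N n).det : ℤ) : ℝ) = ((N n).map (Int.cast : ℤ → ℝ)).det := by
      simpa using RingHom.map_det (Int.castRingHom ℝ) (N n)
    rw [← h1, h0, Int.cast_zero]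
  have h1le : (1 : ℤ) ≤ |(N n).det| := by
    rcases lt_or_ge 0 (|(N n).det|) with h | h
    · omega
    · exfalso; exact hne' (abs_eq_zero.mp (le_antisymm h (abs_nonneg _)))
  have : (1 : ℝ) ≤ |(((N n).det : ℤ) : ℝ)| := by
    rw [← Int.cast_abs]
    exact_mod_cast h1le
  linarith
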